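/- Let I be a 3-CNF instance with m clauses and n variables, let ε ∈ (0,1), and let J be the {0,1}-action linear influence game constructed from I and ε as described. Then J has a pure-strategy Nash equilibrium if and only if I has a satisfying truth assignment. -/

import Mathlib

open Finset

/-- A pure-strategy Nash equilibrium of a `{0,1}`-action linear influence game. -/
def IsPSNE01 {P : Type*} [Fintype P] [DecidableEq P]
    (w : P → P → ℝ) (b : P → ℝ) (x : P → ℝ) : Prop :=
  (∀ p, x p = 0 ∨ x p = 1) ∧
    ∀ p, (2 * x p - 1) * ((∑ q ∈ univ.filter (· ≠ p), w q p * x q) - b p) ≥ 0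

/-- Weights of the `{0,1}`-action LIG built from a 3-CNF instance: each clause `k`
influences each of its variables `i ∈ V k` with weight `1 - 2 l k i`, and each variable
`i` influences each clause `k ∈ C i` with weight `2 l k i - 1`; all other weights are 0. -/
def threeSatW (n m : ℕ) (V : Fin m → Finset (Fin n)) (l : Fin m → Fin n → ℝ) :
    Fin m ⊕ Fin n → Fin m ⊕ Fin n → ℝ
  | Sum.inl k, Sum.inr i => if i ∈ V k then 1 - 2 * l k i else 0
  | Sum.inr i, Sum.inl k => if i ∈ V k then 2 * l k i - 1 else 0
  | _, _ => 0

/-- Thresholds of the `{0,1}`-action LIG built from a 3-CNF instance: clause player `k`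
has threshold `1 - ε - ∑_{i ∈ V k} (1 - l k i)`; variable player `i` has threshold
`∑_{k ∈ C i} (1 - 2 l k i)`. -/
def threeSatB (n m : ℕ) (V : Fin m → Finset (Fin n)) (l : Fin m → Fin n → ℝ) (ε : ℝ) :
    Fin m ⊕ Fin n → ℝ
  | Sum.inl k => 1 - ε - ∑ i ∈ V k, (1 - l k i)
  | Sum.inr i => ∑ k ∈ univ.filter (fun k => i ∈ V k), (1 - 2 * l k i)

/-!
Let `t` and `y` be the actions of the variable and clause players. The net input of clause
player `k` is (number of literals of clause `k` made true by `t`) − (1 − ε), so in an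
equilibrium `y k = 1` forces clause `k` to be satisfied and `y k = 0` forces all its literals
to be false. Summing the variable players' equilibrium inequalities over all variables and
regrouping by clauses gives `0 ≤ ∑ k, (y k - 1) * ∑ i ∈ V k, (2 t i - 1) (1 - 2 l k i)`, where
every clause with `y k = 0` contributes `-|V k| < 0`; so all clause players play `1` and `t`
is satisfying. Conversely, if `t` is satisfying and all clause players play `1`, every variable
player receives net input `0` and is indifferent.
-/

def netInput {P : Type*} [Fintype P] [DecidableEq P] (w : P → P → ℝ) (b x : P → ℝ) (p : P) :
    ℝ :=
  (∑ q ∈ univ.filter (· ≠ p), w q p * x q) - b p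

theorem isPSNE01_iff {P : Type*} [Fintype P] [DecidableEq P] (w : P → P → ℝ) (b x : P → ℝ) :
    IsPSNE01 w b x ↔
      ∀ p, (x p = 1 ∧ 0 ≤ netInput w b x p) ∨ (x p = 0 ∧ netInput w b x p ≤ 0) := by
  refine ⟨fun h p => ?_, fun h => ⟨fun p => ?_, fun p => ?_⟩⟩
  · have hp : 0 ≤ (2 * x p - 1) * netInput w b x p := h.2 p
    rcases h.1 p with h0 | h1
    · right; rw [h0] at hp; exact ⟨h0, by linarith⟩
    · left; rw [h1] at hp; exact ⟨h1, by linarith⟩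
  · rcases h p with ⟨h1, -⟩ | ⟨h0, -⟩
    exacts [Or.inr h1, Or.inl h0]
  · show 0 ≤ (2 * x p - 1) * netInput w b x p
    rcases h p with ⟨h1, hs⟩ | ⟨h0, hs⟩
    · rw [h1]; linarith
    · rw [h0]; linarith

theorem lit_eq_ite {a b : ℝ} (ha : a = 0 ∨ a = 1) (hb : b = 0 ∨ b = 1) :
    (2 * b - 1) * a + (1 - b) = if a = b then 1 else 0 := by
  rcases ha with rfl | rfl <;> rcases hb with rfl | rfl <;> norm_num

theorem mul_sign_eq_one_of_ne {a b : ℝ} (ha : a = 0 ∨ a = 1) (hb : b = 0 ∨ b = 1)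
    (hab : a ≠ b) : (2 * a - 1) * (1 - 2 * b) = 1 := by
  rcases ha with rfl | rfl <;> rcases hb with rfl | rfl <;> norm_num at *

section ThreeSatGame

variable {n m : ℕ} {V : Fin m → Finset (Fin n)} {l : Fin m → Fin n → ℝ} {ε : ℝ}
  {x : Fin m ⊕ Fin n → ℝ}

theorem netInput_threeSat_clause (k : Fin m) :
    netInput (threeSatW n m V l) (threeSatB n m V l ε) x (Sum.inl k) =
      ∑ i ∈ V k, ((2 * l k i - 1) * x (Sum.inr i) + (1 - l k i)) - (1 - ε) := by
  simp [netInput, Finset.sum_filter, Fintype.sum_sum_type, threeSatW, threeSatB,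
    Finset.sum_add_distrib]
  ring

theorem netInput_threeSat_clause_eq_card (hl : ∀ k i, l k i = 0 ∨ l k i = 1)
    (hx : ∀ i, x (Sum.inr i) = 0 ∨ x (Sum.inr i) = 1) (k : Fin m) :
    netInput (threeSatW n m V l) (threeSatB n m V l ε) x (Sum.inl k) =
      (#{i ∈ V k | x (Sum.inr i) = l k i} : ℝ) - (1 - ε) := by
  rw [netInput_threeSat_clause, Finset.sum_congr rfl fun i _ => lit_eq_ite (hx i) (hl k i),
    Finset.sum_boole]

theorem netInput_threeSat_var (i : Fin n) :
    netInput (threeSatW n m V l) (threeSatB n m V l ε) x (Sum.inr i) =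
      ∑ k with i ∈ V k, (1 - 2 * l k i) * (x (Sum.inl k) - 1) := by
  simp only [netInput, threeSatB, mul_sub, mul_one, Finset.sum_sub_distrib]
  simp [Finset.sum_filter, Fintype.sum_sum_type, threeSatW]

theorem sum_mul_netInput_threeSat_var :
    ∑ i, (2 * x (Sum.inr i) - 1) *
        netInput (threeSatW n m V l) (threeSatB n m V l ε) x (Sum.inr i) =
      ∑ k, (x (Sum.inl k) - 1) * ∑ i ∈ V k, (2 * x (Sum.inr i) - 1) * (1 - 2 * l k i) := by
  simp_rw [netInput_threeSat_var, Finset.mul_sum]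
  rw [Finset.sum_comm' (t' := univ) (s' := fun k => V k) (by simp)]
  exact Finset.sum_congr rfl fun k _ => Finset.sum_congr rfl fun i _ => by ring

theorem IsPSNE01.threeSat_satisfies_of_clause_eq_one (hl : ∀ k i, l k i = 0 ∨ l k i = 1)
    (hε1 : ε < 1) (h : IsPSNE01 (threeSatW n m V l) (threeSatB n m V l ε) x) {k : Fin m}
    (hk : x (Sum.inl k) = 1) : ∃ i ∈ V k, x (Sum.inr i) = l k i := by
  rcases (isPSNE01_iff _ _ _).1 h (Sum.inl k) with ⟨-, hs⟩ | ⟨h0, -⟩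
  · rw [netInput_threeSat_clause_eq_card hl fun i => h.1 _] at hs
    have hcard : (0 : ℝ) < #{i ∈ V k | x (Sum.inr i) = l k i} := by linarith
    exact Finset.filter_nonempty_iff.1 (Finset.card_pos.1 (by exact_mod_cast hcard))
  · norm_num [hk] at h0

theorem IsPSNE01.threeSat_not_satisfies_of_clause_eq_zero (hl : ∀ k i, l k i = 0 ∨ l k i = 1)
    (hε0 : 0 < ε) (h : IsPSNE01 (threeSatW n m V l) (threeSatB n m V l ε) x) {k : Fin m}
    (hk : x (Sum.inl k) = 0) : ∀ i ∈ V k, x (Sum.inr i) ≠ l k i := by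
  rcases (isPSNE01_iff _ _ _).1 h (Sum.inl k) with ⟨h1, -⟩ | ⟨-, hs⟩
  · norm_num [hk] at h1
  · rw [netInput_threeSat_clause_eq_card hl fun i => h.1 _] at hs
    have hcard : (#{i ∈ V k | x (Sum.inr i) = l k i} : ℝ) < 1 := by linarith
    have hempty : #{i ∈ V k | x (Sum.inr i) = l k i} = 0 :=
      Nat.lt_one_iff.1 (by exact_mod_cast hcard)
    simpa using hempty

theorem IsPSNE01.threeSat_clause_eq_one (hV : ∀ k, (V k).Nonempty)
    (hl : ∀ k i, l k i = 0 ∨ l k i = 1) (hε0 : 0 < ε)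
    (h : IsPSNE01 (threeSatW n m V l) (threeSatB n m V l ε) x) (k : Fin m) :
    x (Sum.inl k) = 1 := by
  by_contra hk
  have hsum : 0 ≤ ∑ i, (2 * x (Sum.inr i) - 1) *
      netInput (threeSatW n m V l) (threeSatB n m V l ε) x (Sum.inr i) :=
    Finset.sum_nonneg fun i _ => h.2 (Sum.inr i)
  rw [sum_mul_netInput_threeSat_var] at hsum
  have hunsat : ∀ k, x (Sum.inl k) = 0 →
      (x (Sum.inl k) - 1) * ∑ i ∈ V k, (2 * x (Sum.inr i) - 1) * (1 - 2 * l k i) =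
        -#(V k) := by
    intro k hk
    rw [hk, Finset.sum_congr rfl fun i hi => mul_sign_eq_one_of_ne (h.1 _) (hl k i)
      (h.threeSat_not_satisfies_of_clause_eq_zero hl hε0 hk i hi)]
    simp
  have hneg : ∑ k, (x (Sum.inl k) - 1) *
      ∑ i ∈ V k, (2 * x (Sum.inr i) - 1) * (1 - 2 * l k i) < ∑ _k : Fin m, 0 := by
    refine Finset.sum_lt_sum (fun k' _ => ?_) ⟨k, Finset.mem_univ _, ?_⟩
    · rcases h.1 (Sum.inl k') with h0 | h1
      · rw [hunsat k' h0]; simp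
      · rw [h1]; simp
    · rw [hunsat k ((h.1 _).resolve_right hk)]
      simpa using (hV k).card_pos
  simp only [Finset.sum_const_zero] at hneg
  linarith

theorem isPSNE01_threeSat_of_satisfies (hl : ∀ k i, l k i = 0 ∨ l k i = 1) (hε0 : 0 < ε)
    {t : Fin n → ℝ} (ht : ∀ i, t i = 0 ∨ t i = 1) (hsat : ∀ k, ∃ i ∈ V k, t i = l k i) :
    IsPSNE01 (threeSatW n m V l) (threeSatB n m V l ε) (Sum.elim 1 t) := by
  rw [isPSNE01_iff]
  rintro (k | i)
  · refine Or.inl ⟨rfl, ?_⟩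
    rw [netInput_threeSat_clause_eq_card hl ht]
    have hcard : 0 < #{i ∈ V k | Sum.elim (1 : Fin m → ℝ) t (Sum.inr i) = l k i} :=
      Finset.card_pos.2 (Finset.filter_nonempty_iff.2 (hsat k))
    have hcard' : (1 : ℝ) ≤ #{i ∈ V k | Sum.elim (1 : Fin m → ℝ) t (Sum.inr i) = l k i} := by
      exact_mod_cast hcard
    linarith
  · have hzero : netInput (threeSatW n m V l) (threeSatB n m V l ε) (Sum.elim 1 t)
        (Sum.inr i) = 0 := by
      simp [netInput_threeSat_var]
    rcases ht i with h0 | h1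
    exacts [Or.inr ⟨h0, hzero.le⟩, Or.inl ⟨h1, hzero.ge⟩]

end ThreeSatGame

theorem threeSat_lig_psne_iff_satisfiable (n m : ℕ)
    (V : Fin m → Finset (Fin n)) (hV : ∀ k, (V k).card = 3)
    (l : Fin m → Fin n → ℝ) (hl : ∀ k i, l k i = 0 ∨ l k i = 1)
    (ε : ℝ) (hε0 : 0 < ε) (hε1 : ε < 1) :
    (∃ x : Fin m ⊕ Fin n → ℝ, IsPSNE01 (threeSatW n m V l) (threeSatB n m V l ε) x)
      ↔
    (∃ t : Fin n → ℝ, (∀ i, t i = 0 ∨ t i = 1) ∧ ∀ k, ∃ i ∈ V k, t i = l k i) := by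
  have hVne : ∀ k, (V k).Nonempty := fun k => Finset.card_pos.1 (by rw [hV k]; norm_num)
  constructor
  · rintro ⟨x, hx⟩
    exact ⟨fun i => x (Sum.inr i), fun i => hx.1 _, fun k =>
      hx.threeSat_satisfies_of_clause_eq_one hl hε1 (hx.threeSat_clause_eq_one hVne hl hε0 k)⟩
  · rintro ⟨t, ht, hsat⟩
    exact ⟨_, isPSNE01_threeSat_of_satisfies hl hε0 ht hsat⟩
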